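/- The map R : E₀ × (E₁ × N × ℂ) → E₁ × N × ℂ given by R_v(u,x,z) = (u+v, x, z·exp((m/(iℏ))(⟨v, x−x₀−τ(x−x₀)u⟩ − (τ(x−x₀)/2)‖v‖²))) defines a group action of the additive group E₀: R_0 = id and R_{v'} ∘ R_v = R_{v+v'}. -/

import Mathlib

noncomputable section

variable {V : Type*} [NormedAddCommGroup V] [InnerProductSpace ℝ V]
variable {N : Type*} [AddTorsor V N]

/-- The action `R_v` of `E₀ = ker τ` on `E₁ × N × ℂ`. -/
def Rv (τ : V →ₗ[ℝ] ℝ) (x₀ : N) (m ℏ : ℝ) (v : V) (p : V × N × ℂ) : V × N × ℂ :=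
  (p.1 + v, p.2.1,
    p.2.2 * Complex.exp ((↑m / (Complex.I * ℏ)) *
      (((inner ℝ v ((p.2.1 -ᵥ x₀) - τ (p.2.1 -ᵥ x₀) • p.1) : ℝ) : ℂ) -
        ((τ (p.2.1 -ᵥ x₀) / 2 : ℝ) : ℂ) * ((‖v‖ ^ 2 : ℝ) : ℂ))))

/-- `R` is an action of the additive group `E₀ = ker τ`:
`R_0 = id` and `R_{v'} ∘ R_v = R_{v+v'}`. -/
theorem Rv_action (τ : V →ₗ[ℝ] ℝ) (hτ : τ ≠ 0) (x₀ : N) (m ℏ : ℝ)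
    (hm : m ≠ 0) (hh : ℏ ≠ 0) :
    (∀ p : V × N × ℂ, Rv τ x₀ m ℏ 0 p = p) ∧
    (∀ v v' : V, τ v = 0 → τ v' = 0 → ∀ p : V × N × ℂ, τ p.1 = 1 →
      Rv τ x₀ m ℏ v' (Rv τ x₀ m ℏ v p) = Rv τ x₀ m ℏ (v + v') p) := by
  constructor
  · intro p
    simp [Rv, inner_zero_left]
  · intro v v' hv hv' p hp
    obtain ⟨u, x, z⟩ := p
    simp only [Rv]
    refine Prod.ext (by simp [add_assoc]) (Prod.ext rfl ?_)
    simp only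
    rw [mul_assoc, ← Complex.exp_add, ← mul_add]
    congr 1
    have h1 : (inner ℝ v' ((x -ᵥ x₀) - τ (x -ᵥ x₀) • (u + v)) : ℝ)
        = (inner ℝ v' ((x -ᵥ x₀) - τ (x -ᵥ x₀) • u) : ℝ) - τ (x -ᵥ x₀) * (inner ℝ v v' : ℝ) := by
      simp [smul_add, inner_sub_right, inner_add_right, inner_smul_right, real_inner_comm v v']
      ring
    have h2 : (inner ℝ (v + v') ((x -ᵥ x₀) - τ (x -ᵥ x₀) • u) : ℝ)
        = (inner ℝ v ((x -ᵥ x₀) - τ (x -ᵥ x₀) • u) : ℝ)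
          + (inner ℝ v' ((x -ᵥ x₀) - τ (x -ᵥ x₀) • u) : ℝ) := by
      rw [inner_add_left]
    have h3 : ‖v + v'‖ ^ 2 = ‖v‖ ^ 2 + 2 * (inner ℝ v v' : ℝ) + ‖v'‖ ^ 2 := by
      rw [norm_add_sq_real]
    rw [h1, h2, h3]
    push_cast
    ring
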